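/- arXiv:2204.05590 — 3 statements merged into one kernel-verified Lean document; each statement's English description precedes it below -/
import Mathlib

section
/- Weak limits of superlinear powers dominate the weak limit (convexity/lower-semicontinuity step of the saturation relation): Let Q be a measurable subset of ℝ^N of finite Lebesgue measure and M > 0. For each γ > 1 let p_γ : Q → [0,M] be measurable, and suppose p_γ ⇀ p weakly in L²(Q) and p_γ^{(γ+1)/γ} ⇀ v weakly in L²(Q) as γ → ∞. Then v ≥ p almost everywhere in Q. -/
/-! By Bernoulli's inequality `x - 1/γ ≤ x ^ (1 + 1/γ)` for `x ≥ 0`. Testing this against the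
indicator of a measurable set `s` and passing to the weak limits gives `∫_s p ≤ ∫_s v` for every
`s`, hence `p ≤ v` almost everywhere on `Q`. -/

open MeasureTheory Real Set Filter Topology

theorem Real.sub_le_rpow_one_add {x ε : ℝ} (hx : 0 ≤ x) (hε : 0 ≤ ε) : x - ε ≤ x ^ (1 + ε) := by
  have bernoulli := one_add_mul_self_le_rpow_one_add (s := x - 1) (by linarith) (p := 1 + ε)
    (by linarith)
  rw [add_sub_cancel] at bernoulli
  nlinarith

namespace MeasureTheory

variable {α : Type*} [MeasurableSpace α] {μ : Measure α}

theorem integral_mul_indicator_one (f : α → ℝ) {s : Set α} (hs : MeasurableSet s) :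
    ∫ x, f x * s.indicator (fun _ => (1 : ℝ)) x ∂μ = ∫ x in s, f x ∂μ := by
  rw [← integral_indicator hs]
  congr 1 with x
  by_cases hx : x ∈ s <;> simp [hx]

/-- The set integrals in `hf_le` may be junk values; the hypothesis is only used on the sets where
`f` and `g` are bounded. -/
theorem ae_le_of_forall_setIntegral_le_of_measurable [IsFiniteMeasure μ] {f g : α → ℝ}
    (hf : Measurable f) (hg : Measurable g)
    (hf_le : ∀ s, MeasurableSet s → ∫ x in s, f x ∂μ ≤ ∫ x in s, g x ∂μ) :
    f ≤ᵐ[μ] g := by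
  set S : ℕ → Set α := fun n => {x | |f x| ≤ n} ∩ {x | |g x| ≤ n}
  have hS : ∀ n, MeasurableSet (S n) := fun n =>
    (measurableSet_le hf.abs measurable_const).inter (measurableSet_le hg.abs measurable_const)
  have hS_univ : ⋃ n, S n = univ := by
    refine eq_univ_of_forall fun x => mem_iUnion.2 ?_
    obtain ⟨n, hn⟩ := exists_nat_ge (max |f x| |g x|)
    exact ⟨n, (le_max_left _ _).trans hn, (le_max_right _ _).trans hn⟩
  have h_bounded : ∀ (h : α → ℝ), Measurable h → ∀ n, (∀ x ∈ S n, |h x| ≤ n) →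
      Integrable h (μ.restrict (S n)) := fun h hh n hbd =>
    .of_bound hh.aestronglyMeasurable n (ae_restrict_of_forall_mem (hS n) hbd)
  rw [← Measure.restrict_univ (μ := μ), ← hS_univ, EventuallyLE, ae_restrict_iUnion_iff]
  intro n
  refine ae_le_of_forall_setIntegral_le (h_bounded f hf n fun x hx => hx.1)
    (h_bounded g hg n fun x hx => hx.2) fun s hs _ => ?_
  simpa only [Measure.restrict_restrict hs] using hf_le _ (hs.inter (hS n))

theorem le_of_tendsto_integral_mul_of_sub_le {ι : Type*} {l : Filter ι} [l.NeBot]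
    {u w : ι → α → ℝ} {ε : ι → ℝ} {g : α → ℝ} {a b : ℝ}
    (hg : Integrable g μ) (hg_nonneg : 0 ≤ g)
    (hu : ∀ᶠ i in l, Integrable (fun x => u i x * g x) μ)
    (hw : ∀ᶠ i in l, Integrable (fun x => w i x * g x) μ)
    (huw : ∀ᶠ i in l, ∀ᵐ x ∂μ, u i x - ε i ≤ w i x) (hε : Tendsto ε l (𝓝 0))
    (hua : Tendsto (fun i => ∫ x, u i x * g x ∂μ) l (𝓝 a))
    (hwb : Tendsto (fun i => ∫ x, w i x * g x ∂μ) l (𝓝 b)) : a ≤ b := by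
  have h_lim : Tendsto (fun i => ∫ x, u i x * g x ∂μ - ε i * ∫ x, g x ∂μ) l
      (𝓝 (a - 0 * ∫ x, g x ∂μ)) := hua.sub (hε.mul_const _)
  rw [zero_mul, sub_zero] at h_lim
  refine le_of_tendsto_of_tendsto h_lim hwb ?_
  filter_upwards [hu, hw, huw] with i hui hwi huwi
  rw [← integral_const_mul, ← integral_sub hui (hg.const_mul _)]
  refine integral_mono_ae (hui.sub (hg.const_mul _)) hwi ?_
  filter_upwards [huwi] with x hx
  simpa only [sub_mul] using mul_le_mul_of_nonneg_right hx (hg_nonneg x)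

end MeasureTheory

theorem weak_limit_of_powers_dominates_general (N : ℕ) (Q : Set (EuclideanSpace ℝ (Fin N)))
    (hQ : MeasurableSet Q) (hQfin : volume Q < ⊤) (M : ℝ)
    (p : ℝ → EuclideanSpace ℝ (Fin N) → ℝ)
    (plim v : EuclideanSpace ℝ (Fin N) → ℝ)
    (hmeas : ∀ γ : ℝ, 1 < γ → Measurable (p γ))
    (hmeasp : Measurable plim) (hmeasv : Measurable v)
    (hbd : ∀ γ : ℝ, 1 < γ → ∀ x ∈ Q, p γ x ∈ Set.Icc 0 M)
    (hweakp : ∀ g : EuclideanSpace ℝ (Fin N) → ℝ, MemLp g 2 (volume.restrict Q) →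
      Tendsto (fun γ : ℝ => ∫ x in Q, p γ x * g x) atTop (nhds (∫ x in Q, plim x * g x)))
    (hweakv : ∀ g : EuclideanSpace ℝ (Fin N) → ℝ, MemLp g 2 (volume.restrict Q) →
      Tendsto (fun γ : ℝ => ∫ x in Q, p γ x ^ ((γ + 1) / γ) * g x) atTop
        (nhds (∫ x in Q, v x * g x))) :
    ∀ᵐ x ∂volume.restrict Q, plim x ≤ v x := by
  have : IsFiniteMeasure (volume.restrict Q) := isFiniteMeasure_restrict.2 hQfin.ne
  refine ae_le_of_forall_setIntegral_le_of_measurable hmeasp hmeasv fun s hs => ?_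
  have hg : MemLp (s.indicator fun _ => (1 : ℝ)) 2 (volume.restrict Q) :=
    (memLp_const (1 : ℝ)).indicator hs
  rw [← integral_mul_indicator_one _ hs, ← integral_mul_indicator_one _ hs]
  have h_bound : ∀ᶠ γ in atTop, ∀ᵐ x ∂volume.restrict Q, p γ x ∈ Icc 0 M :=
    (eventually_gt_atTop 1).mono fun γ hγ => ae_restrict_of_forall_mem hQ (hbd γ hγ)
  have hg_int := hg.integrable one_le_two
  refine le_of_tendsto_integral_mul_of_sub_le hg_int (indicator_nonneg fun _ _ => zero_le_one)
    ?_ ?_ ?_ tendsto_inv_atTop_zero (hweakp _ hg) (hweakv _ hg)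
  · filter_upwards [h_bound, eventually_gt_atTop 1] with γ hγ hγ1
    refine hg_int.bdd_mul (hmeas γ hγ1).aestronglyMeasurable (c := M) ?_
    filter_upwards [hγ] with x hx
    rw [norm_of_nonneg hx.1]
    exact hx.2
  · filter_upwards [h_bound, eventually_gt_atTop 1] with γ hγ hγ1
    refine hg_int.bdd_mul (c := M ^ ((γ + 1) / γ))
      ((hmeas γ hγ1).pow_const _).aestronglyMeasurable ?_
    filter_upwards [hγ] with x hx
    rw [norm_of_nonneg (rpow_nonneg hx.1 _)]
    exact rpow_le_rpow hx.1 hx.2 (by positivity)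
  · filter_upwards [h_bound, eventually_gt_atTop 0] with γ hγ hγ0
    filter_upwards [hγ] with x hx
    rw [add_div, div_self hγ0.ne', ← one_div]
    exact sub_le_rpow_one_add hx.1 (by positivity)

/-- **Weak limits of superlinear powers dominate the weak limit.**
If `0 ≤ p_γ ≤ M` on a finite-measure set `Q`, `p_γ ⇀ p` weakly in `L²(Q)` and
`p_γ^{(γ+1)/γ} ⇀ v` weakly in `L²(Q)` as `γ → ∞`, then `v ≥ p` a.e. in `Q`. -/
theorem weak_limit_of_powers_dominates (N : ℕ) (Q : Set (EuclideanSpace ℝ (Fin N)))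
    (hQ : MeasurableSet Q) (hQfin : volume Q < ⊤) (M : ℝ) (hM : 0 < M)
    (p : ℝ → EuclideanSpace ℝ (Fin N) → ℝ)
    (plim v : EuclideanSpace ℝ (Fin N) → ℝ)
    (hmeas : ∀ γ : ℝ, 1 < γ → Measurable (p γ))
    (hmeasp : Measurable plim) (hmeasv : Measurable v)
    (hbd : ∀ γ : ℝ, 1 < γ → ∀ x ∈ Q, p γ x ∈ Set.Icc 0 M)
    (hweakp : ∀ g : EuclideanSpace ℝ (Fin N) → ℝ, MemLp g 2 (volume.restrict Q) →
      Tendsto (fun γ : ℝ => ∫ x in Q, p γ x * g x) atTop (nhds (∫ x in Q, plim x * g x)))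
    (hweakv : ∀ g : EuclideanSpace ℝ (Fin N) → ℝ, MemLp g 2 (volume.restrict Q) →
      Tendsto (fun γ : ℝ => ∫ x in Q, p γ x ^ ((γ + 1) / γ) * g x) atTop
        (nhds (∫ x in Q, v x * g x))) :
    ∀ᵐ x ∂volume.restrict Q, plim x ≤ v x :=
  weak_limit_of_powers_dominates_general N Q hQ hQfin M p plim v hmeas hmeasp hmeasv hbd hweakp
    hweakv
end

section
/- Explicit Gaussian subsolution: Let d ≥ 1, γ > 1, 0 < ε ≤ 1, r ≥ 0, and set K := 2d(ε + γ) + r and ρ̲(x,t) := ε e^{−Kt} e^{−|x|²} for (x,t) ∈ ℝ^d×[0,∞). Then ρ̲ is a subsolution of the regularized porous-medium equation with absorption, i.e. for every x ∈ ℝ^d and t ≥ 0: ∂_t ρ̲(x,t) ≤ (γ/(γ+1)) Δ(ρ̲^{γ+1})(x,t) + ε Δρ̲(x,t) − r ρ̲(x,t). -/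
/-!
Both `ρ̲(·,t)` and `ρ̲(·,t)^{γ+1}` are Gaussians `A e^{b|x|²}` with `A ≥ 0`, whose Laplacian
`A e^{b|x|²} (2bd + 4b²|x|²)` is at least `2bd · A e^{b|x|²}`. Since `ρ̲ ≤ ε ≤ 1` we have
`ρ̲^{γ+1} ≤ ρ̲`, so the right-hand side is at least `-(2dγ + 2dε + r) ρ̲ = -K ρ̲ = ∂ₜρ̲`.
-/

open MeasureTheory Real Set Filter Topology

noncomputable section

/-- Second partial derivative `∂²f/∂xᵢ∂xⱼ`. -/
def pd2 {d : ℕ} (f : EuclideanSpace ℝ (Fin d) → ℝ) (i j : Fin d)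
    (x : EuclideanSpace ℝ (Fin d)) : ℝ :=
  fderiv ℝ (fun y => fderiv ℝ f y (EuclideanSpace.single j 1)) x (EuclideanSpace.single i 1)

/-- Laplacian in the space variable. -/
def lap {d : ℕ} (f : EuclideanSpace ℝ (Fin d) → ℝ) (x : EuclideanSpace ℝ (Fin d)) : ℝ :=
  ∑ i, pd2 f i i x

section InnerProductSpace

variable {E : Type*} [NormedAddCommGroup E] [InnerProductSpace ℝ E] (A b : ℝ)

theorem hasFDerivAt_gaussian (y : E) :
    HasFDerivAt (fun z : E => A * exp (b * ‖z‖ ^ 2))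
      (A • exp (b * ‖y‖ ^ 2) • b • (2 : ℕ) • innerSL ℝ y) y :=
  (((hasStrictFDerivAt_norm_sq y).hasFDerivAt.const_mul b).exp).const_mul A

theorem fderiv_gaussian_apply (y v : E) :
    fderiv ℝ (fun z : E => A * exp (b * ‖z‖ ^ 2)) y v
      = A * exp (b * ‖y‖ ^ 2) * (2 * b * inner ℝ y v) := by
  rw [(hasFDerivAt_gaussian A b y).fderiv]
  simp only [smul_apply, innerSL_apply_apply, smul_eq_mul, nsmul_eq_mul,
    Nat.cast_ofNat]
  ring

theorem fderiv_fderiv_gaussian_apply_self (x v : E) :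
    fderiv ℝ (fun y => fderiv ℝ (fun z : E => A * exp (b * ‖z‖ ^ 2)) y v) x v
      = A * exp (b * ‖x‖ ^ 2) * (2 * b * ‖v‖ ^ 2 + 4 * b ^ 2 * inner ℝ x v ^ 2) := by
  simp only [fderiv_gaussian_apply, real_inner_comm v]
  have hinner : HasFDerivAt (fun y : E => 2 * b * inner ℝ v y) ((2 * b) • innerSL ℝ v) x :=
    ((innerSL ℝ v).hasFDerivAt).const_mul (2 * b)
  have hprod : HasFDerivAt (fun y : E => A * exp (b * ‖y‖ ^ 2) * (2 * b * inner ℝ v y)) _ x :=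
    (hasFDerivAt_gaussian A b x).mul hinner
  rw [hprod.fderiv]
  simp only [add_apply, smul_apply, innerSL_apply_apply,
    smul_eq_mul, nsmul_eq_mul, Nat.cast_ofNat, real_inner_self_eq_norm_sq, real_inner_comm v x]
  ring

end InnerProductSpace

section EuclideanSpace

variable {d : ℕ} (A b : ℝ)

theorem pd2_gaussian (x : EuclideanSpace ℝ (Fin d)) (i : Fin d) :
    pd2 (fun z => A * exp (b * ‖z‖ ^ 2)) i i x
      = A * exp (b * ‖x‖ ^ 2) * (2 * b + 4 * b ^ 2 * x i ^ 2) := by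
  rw [pd2, fderiv_fderiv_gaussian_apply_self, PiLp.norm_single,
    EuclideanSpace.inner_single_right]
  simp

theorem lap_gaussian (x : EuclideanSpace ℝ (Fin d)) :
    lap (fun z => A * exp (b * ‖z‖ ^ 2)) x
      = A * exp (b * ‖x‖ ^ 2) * (2 * b * d + 4 * b ^ 2 * ‖x‖ ^ 2) := by
  simp only [lap, pd2_gaussian]
  rw [← Finset.mul_sum, Finset.sum_add_distrib, Finset.sum_const, Finset.card_univ,
    Fintype.card_fin, nsmul_eq_mul, ← Finset.mul_sum, ← EuclideanSpace.real_norm_sq_eq]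
  ring

theorem mul_le_lap_gaussian {A : ℝ} (hA : 0 ≤ A) (x : EuclideanSpace ℝ (Fin d)) :
    2 * b * d * (A * exp (b * ‖x‖ ^ 2)) ≤ lap (fun z => A * exp (b * ‖z‖ ^ 2)) x := by
  rw [lap_gaussian]
  nlinarith [mul_nonneg (mul_nonneg hA (exp_pos (b * ‖x‖ ^ 2)).le)
    (mul_nonneg (sq_nonneg b) (sq_nonneg ‖x‖))]

end EuclideanSpace

theorem gaussian_subsolution_general (d : ℕ) (γ ε r : ℝ)
    (hγ : 1 < γ) (hε0 : 0 < ε) (hε1 : ε ≤ 1) (hr : 0 ≤ r)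
    (K : ℝ) (hK : K = 2 * d * (ε + γ) + r)
    (ρ : EuclideanSpace ℝ (Fin d) → ℝ → ℝ)
    (hρ : ∀ x t, ρ x t = ε * Real.exp (-K * t) * Real.exp (-‖x‖ ^ 2)) :
    ∀ (x : EuclideanSpace ℝ (Fin d)) (t : ℝ), 0 ≤ t →
      deriv (fun s => ρ x s) t ≤
        (γ / (γ + 1)) * lap (fun y => ρ y t ^ (γ + 1)) x
          + ε * lap (fun y => ρ y t) x - r * ρ x t := by
  intro x t ht
  set c := ε * exp (-K * t)
  have hc0 : 0 < c := by positivity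
  have hρ_gauss (y) : ρ y t = c * exp (-1 * ‖y‖ ^ 2) := by rw [hρ, neg_one_mul]
  have hρpow_gauss (y) : ρ y t ^ (γ + 1) = c ^ (γ + 1) * exp (-(γ + 1) * ‖y‖ ^ 2) := by
    rw [hρ_gauss, mul_rpow hc0.le (exp_pos _).le, ← exp_mul]
    ring_nf
  have hlap_pow := mul_le_lap_gaussian (-(γ + 1)) (rpow_nonneg hc0.le (γ + 1)) x
  have hlap := mul_le_lap_gaussian (-1) hc0.le x
  simp only [← hρ_gauss, ← hρpow_gauss] at hlap_pow hlap
  have hρ_le_one : ρ x t ≤ 1 := by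
    have hK0 : 0 ≤ K := by rw [hK]; positivity
    rw [hρ]
    refine mul_le_one₀ (mul_le_one₀ hε1 (exp_pos _).le ?_) (exp_pos _).le ?_ <;> rw [exp_le_one_iff]
    · nlinarith
    · exact neg_nonpos.2 (sq_nonneg _)
  have hpow_le : ρ x t ^ (γ + 1) ≤ ρ x t :=
    rpow_le_self_of_le_one (by rw [hρ]; positivity) hρ_le_one (by linarith)
  have hderiv : HasDerivAt (fun s => ρ x s) (-K * ρ x t) t := by
    simp only [hρ]
    exact (((hasDerivAt_id' t).const_mul (-K)).exp.const_mul ε).mul_const _ |>.congr_deriv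
      (by ring)
  have h₁ := mul_le_mul_of_nonneg_left hlap_pow (by positivity : 0 ≤ γ / (γ + 1))
  have h₂ := mul_le_mul_of_nonneg_left hlap hε0.le
  have h₃ := mul_le_mul_of_nonneg_left hpow_le (by positivity : (0 : ℝ) ≤ 2 * d * γ)
  rw [show γ / (γ + 1) * (2 * -(γ + 1) * d * ρ x t ^ (γ + 1)) = -(2 * d * γ * ρ x t ^ (γ + 1))
    by field_simp] at h₁
  rw [hderiv.deriv, hK]
  linarith

/-- **Explicit Gaussian subsolution.**  For `K = 2d(ε+γ)+r` the function
`ρ̲(x,t) = ε e^{-Kt} e^{-|x|²}` is a subsolution of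
`∂_t ρ = (γ/(γ+1)) Δ(ρ^{γ+1}) + ε Δρ - r ρ`. -/
theorem gaussian_subsolution (d : ℕ) (hd : 1 ≤ d) (γ ε r : ℝ)
    (hγ : 1 < γ) (hε0 : 0 < ε) (hε1 : ε ≤ 1) (hr : 0 ≤ r)
    (K : ℝ) (hK : K = 2 * d * (ε + γ) + r)
    (ρ : EuclideanSpace ℝ (Fin d) → ℝ → ℝ)
    (hρ : ∀ x t, ρ x t = ε * Real.exp (-K * t) * Real.exp (-‖x‖ ^ 2)) :
    ∀ (x : EuclideanSpace ℝ (Fin d)) (t : ℝ), 0 ≤ t →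
      deriv (fun s => ρ x s) t ≤
        (γ / (γ + 1)) * lap (fun y => ρ y t ^ (γ + 1)) x
          + ε * lap (fun y => ρ y t) x - r * ρ x t :=
  gaussian_subsolution_general d γ ε r hγ hε0 hε1 hr K hK ρ hρ
end
end

section
/- Equation for the phenotype density fractions: Let ε ≥ 0, γ > 1, and let n : [0,1]×ℝ^d×(0,T) → ℝ be smooth, satisfying classically ∂_t n(y,x,t) = ∇·(n ∇p) + ε Δn + n R(y,p), where ρ(x,t) = ∫₀¹ n(y,x,t) dy is assumed strictly positive and smooth, and p = ρ^γ. Then the fraction σ(y,x,t) := n(y,x,t)/ρ(x,t) satisfies, classically on [0,1]×ℝ^d×(0,T): ∂_t σ = ε Δσ + (2ε/ρ) ∇σ·∇ρ + ∇σ·∇p + σ R(y,p) − σ ∫₀¹ σ(η,x,t) R(η,p(x,t)) dη. -/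
open MeasureTheory Real Set Filter Topology RealInnerProductSpace

set_option maxHeartbeats 1000000

noncomputable section

/-- Divergence of a vector field on `ℝ^d`. -/
def divg {d : ℕ} (v : EuclideanSpace ℝ (Fin d) → EuclideanSpace ℝ (Fin d))
    (x : EuclideanSpace ℝ (Fin d)) : ℝ :=
  ∑ i, fderiv ℝ (fun y => v y i) x (EuclideanSpace.single i 1)

/-! ### Auxiliary lemmas -/

/-- Differentiation under the integral sign over `[0,1]`, one-dimensional parameter. -/
theorem param_hasDerivAt (F : ℝ → ℝ → ℝ)
    (hF : ContDiff ℝ (⊤ : ℕ∞) (fun q : ℝ × ℝ => F q.1 q.2)) (s₀ : ℝ) :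
    HasDerivAt (fun s => ∫ y in Icc (0:ℝ) 1, F y s) (∫ y in Icc (0:ℝ) 1, deriv (F y) s₀) s₀ := by
  have hFc : Continuous (fun q : ℝ × ℝ => F q.1 q.2) := hF.continuous
  have hdiff : ∀ y s, HasDerivAt (F y) (deriv (F y) s) s := by
    intro y s
    have : DifferentiableAt ℝ (F y) s := by
      have : ContDiff ℝ (⊤ : ℕ∞) (F y) := hF.comp (contDiff_const.prodMk contDiff_id)
      exact this.differentiable (n := (⊤ : ℕ∞)) (by simp) s
    exact this.hasDerivAt
  have hF'c : Continuous (fun q : ℝ × ℝ => deriv (F q.1) q.2) := by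
    have h0 : ContDiff ℝ (⊤ : ℕ∞) (Function.uncurry fun (q : ℝ × ℝ) (s : ℝ) => F q.1 s) :=
      hF.comp ((contDiff_fst.comp contDiff_fst).prodMk contDiff_snd)
    have h1 : Continuous fun q : ℝ × ℝ => fderiv ℝ (F q.1) q.2 :=
      (h0.fderiv (contDiff_snd (n := ((⊤ : ℕ∞) : WithTop ℕ∞))) (by exact_mod_cast le_top)).continuous
    have h2 : Continuous fun q : ℝ × ℝ => fderiv ℝ (F q.1) q.2 (1:ℝ) :=
      h1.clm_apply continuous_const
    simpa only [fderiv_apply_one_eq_deriv] using h2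
  obtain ⟨C, hC⟩ := (isCompact_Icc.prod (isCompact_Icc (a := s₀ - 1) (b := s₀ + 1))).exists_bound_of_continuousOn
    (hF'c.continuousOn (s := Icc (0:ℝ) 1 ×ˢ Icc (s₀-1) (s₀+1)))
  refine (hasDerivAt_integral_of_dominated_loc_of_deriv_le (s := Metric.ball s₀ 1) (Metric.ball_mem_nhds s₀ one_pos)
    (F := fun s y => F y s) (F' := fun s y => deriv (F y) s) (bound := fun _ => C)
    ?_ ?_ ?_ ?_ ?_ ?_).2
  · filter_upwards with s
    exact (hFc.comp (continuous_id.prodMk continuous_const)).aestronglyMeasurable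
  · exact ((hFc.comp (continuous_id.prodMk continuous_const)).integrableOn_Icc).mono_measure
      (le_refl _) |>.mono_set (subset_refl _)
  · exact (hF'c.comp (continuous_id.prodMk continuous_const)).aestronglyMeasurable
  · filter_upwards [ae_restrict_mem measurableSet_Icc] with y hy
    intro s hs
    have : (y, s) ∈ Icc (0:ℝ) 1 ×ˢ Icc (s₀-1) (s₀+1) := by
      constructor
      · exact hy
      · simp only [Metric.mem_ball, Real.dist_eq] at hs
        constructor <;> [linarith [abs_lt.mp hs]; linarith [abs_lt.mp hs]]
    exact hC _ this
  · exact integrableOn_const (by simp [measure_Icc_lt_top])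
  · filter_upwards with y s _
    exact hdiff y s

theorem lineDeriv_aux {d : ℕ} (f : EuclideanSpace ℝ (Fin d) → ℝ)
    (x v : EuclideanSpace ℝ (Fin d)) (hf : DifferentiableAt ℝ f x) :
    HasDerivAt (fun s : ℝ => f (x + s • v)) (fderiv ℝ f x v) 0 := by
  have hline : HasDerivAt (fun s : ℝ => x + s • v) v 0 := by
    simpa using ((hasDerivAt_id (0:ℝ)).smul_const v).const_add x
  have hx : x + (0:ℝ) • v = x := by simp
  have hfd : HasFDerivAt f (fderiv ℝ f x) (x + (0:ℝ) • v) := by rw [hx]; exact hf.hasFDerivAt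
  exact hfd.comp_hasDerivAt 0 hline

/-- Exchange of a directional derivative with the integral. -/
theorem fderiv_param_integral {d : ℕ} (F : ℝ → EuclideanSpace ℝ (Fin d) → ℝ)
    (hF : ContDiff ℝ (⊤ : ℕ∞) (fun q : ℝ × EuclideanSpace ℝ (Fin d) => F q.1 q.2))
    (G : EuclideanSpace ℝ (Fin d) → ℝ) (hG : ∀ z, G z = ∫ y in Icc (0:ℝ) 1, F y z)
    (hGd : Differentiable ℝ G) (x v : EuclideanSpace ℝ (Fin d)) :
    fderiv ℝ G x v = ∫ y in Icc (0:ℝ) 1, fderiv ℝ (F y) x v := by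
  have h1 : HasDerivAt (fun s : ℝ => G (x + s • v)) (fderiv ℝ G x v) 0 :=
    lineDeriv_aux G x v (hGd x)
  have hFt : ContDiff ℝ (⊤ : ℕ∞) (fun q : ℝ × ℝ => F q.1 (x + q.2 • v)) :=
    hF.comp (contDiff_fst.prodMk (contDiff_const.add (contDiff_snd.smul contDiff_const)))
  have h2 := param_hasDerivAt (fun y s => F y (x + s • v)) hFt 0
  have h3 : (fun s : ℝ => G (x + s • v)) = fun s => ∫ y in Icc (0:ℝ) 1, F y (x + s • v) := by
    funext s; exact hG _
  rw [h3] at h1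
  have h4 : (∫ y in Icc (0:ℝ) 1, deriv (fun s : ℝ => F y (x + s • v)) 0)
      = ∫ y in Icc (0:ℝ) 1, fderiv ℝ (F y) x v := by
    refine setIntegral_congr_fun measurableSet_Icc (fun y _ => ?_)
    have hFy : Differentiable ℝ (F y) :=
      (hF.comp ((contDiff_const (c := y)).prodMk contDiff_id)).differentiable (n := (⊤ : ℕ∞)) (by simp)
    exact (lineDeriv_aux (F y) x v (hFy x)).deriv
  rw [h4] at h2
  exact h1.unique h2

theorem euclid_gradient_coord {d : ℕ} (f : EuclideanSpace ℝ (Fin d) → ℝ)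
    (x : EuclideanSpace ℝ (Fin d)) (i : Fin d) :
    gradient f x i = fderiv ℝ f x (EuclideanSpace.single i 1) := by
  have h1 : ⟪gradient f x, EuclideanSpace.single i (1:ℝ)⟫ = fderiv ℝ f x (EuclideanSpace.single i 1) := by
    rw [gradient]; exact InnerProductSpace.toDual_symm_apply
  rw [← h1, real_inner_comm, EuclideanSpace.inner_single_left]
  simp

theorem euclid_inner_grad {d : ℕ} (f g : EuclideanSpace ℝ (Fin d) → ℝ)
    (x : EuclideanSpace ℝ (Fin d)) :
    ⟪gradient f x, gradient g x⟫
      = ∑ i, fderiv ℝ f x (EuclideanSpace.single i 1) * fderiv ℝ g x (EuclideanSpace.single i 1) := by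
  rw [PiLp.inner_apply]
  refine Finset.sum_congr rfl fun i _ => ?_
  rw [euclid_gradient_coord, euclid_gradient_coord, RCLike.inner_apply', conj_trivial]

/-- Smoothness of `(y,z) ↦ (∂_v F)(y,z)` for a smooth family. -/
theorem contDiff_fderiv_param {d : ℕ} (F : ℝ → EuclideanSpace ℝ (Fin d) → ℝ)
    (hF : ContDiff ℝ (⊤ : ℕ∞) (fun q : ℝ × EuclideanSpace ℝ (Fin d) => F q.1 q.2))
    (v : EuclideanSpace ℝ (Fin d)) :
    ContDiff ℝ (⊤ : ℕ∞) (fun q : ℝ × EuclideanSpace ℝ (Fin d) => fderiv ℝ (F q.1) q.2 v) := by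
  have h0 : ContDiff ℝ (⊤ : ℕ∞) (Function.uncurry fun (q : ℝ × EuclideanSpace ℝ (Fin d))
      (z : EuclideanSpace ℝ (Fin d)) => F q.1 z) :=
    hF.comp ((contDiff_fst.comp contDiff_fst).prodMk contDiff_snd)
  exact (h0.fderiv (contDiff_snd (n := ((⊤ : ℕ∞) : WithTop ℕ∞))) (by exact_mod_cast le_top)).clm_apply contDiff_const

/-- **Equation for the phenotype density fractions.**  If `n` solves
`∂_t n = ∇·(n∇p) + εΔn + nR(y,p)` with `ρ = ∫₀¹ n dy > 0` smooth and `p = ρ^γ`, then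
`σ = n/ρ` solves
`∂_t σ = εΔσ + (2ε/ρ)∇σ·∇ρ + ∇σ·∇p + σR(y,p) - σ∫₀¹ σ(η)R(η,p) dη`. -/
theorem fraction_density_equation (d : ℕ) (hd : 1 ≤ d) (ε γ T : ℝ)
    (hε : 0 ≤ ε) (hγ : 1 < γ) (hT : 0 < T)
    (R : ℝ → ℝ → ℝ) (hR : ContDiff ℝ (⊤ : ℕ∞) (fun q : ℝ × ℝ => R q.1 q.2))
    (n : ℝ → EuclideanSpace ℝ (Fin d) → ℝ → ℝ)
    (hn : ContDiff ℝ (⊤ : ℕ∞) (fun q : ℝ × EuclideanSpace ℝ (Fin d) × ℝ => n q.1 q.2.1 q.2.2))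
    (ρ : EuclideanSpace ℝ (Fin d) → ℝ → ℝ)
    (hρ : ∀ x t, ρ x t = ∫ y in Set.Icc (0 : ℝ) 1, n y x t)
    (hρsmooth : ContDiff ℝ (⊤ : ℕ∞) (fun q : EuclideanSpace ℝ (Fin d) × ℝ => ρ q.1 q.2))
    (hρpos : ∀ x t, 0 < ρ x t)
    (p : EuclideanSpace ℝ (Fin d) → ℝ → ℝ)
    (hp : ∀ x t, p x t = ρ x t ^ γ)
    (heq : ∀ y ∈ Set.Icc (0 : ℝ) 1, ∀ (x : EuclideanSpace ℝ (Fin d)),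
      ∀ t ∈ Set.Ioo (0 : ℝ) T,
      deriv (fun s => n y x s) t
        = divg (fun z => n y z t • gradient (fun w => p w t) z) x
          + ε * lap (fun z => n y z t) x + n y x t * R y (p x t))
    (σ : ℝ → EuclideanSpace ℝ (Fin d) → ℝ → ℝ)
    (hσ : ∀ y x t, σ y x t = n y x t / ρ x t) :
    ∀ y ∈ Set.Icc (0 : ℝ) 1, ∀ (x : EuclideanSpace ℝ (Fin d)),
      ∀ t ∈ Set.Ioo (0 : ℝ) T,
      deriv (fun s => σ y x s) t
        = ε * lap (fun z => σ y z t) x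
          + (2 * ε / ρ x t) *
              ⟪gradient (fun z => σ y z t) x, gradient (fun z => ρ z t) x⟫
          + ⟪gradient (fun z => σ y z t) x, gradient (fun z => p z t) x⟫
          + σ y x t * R y (p x t)
          - σ y x t * ∫ η in Set.Icc (0 : ℝ) 1, σ η x t * R η (p x t) := by
  intro y hy x t ht
  have hρne : ∀ x t, ρ x t ≠ 0 := fun x t => ne_of_gt (hρpos x t)
  -- smoothness of σ and p
  have hσs : ContDiff ℝ (⊤ : ℕ∞) (fun q : ℝ × EuclideanSpace ℝ (Fin d) × ℝ => σ q.1 q.2.1 q.2.2) := by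
    have h : (fun q : ℝ × EuclideanSpace ℝ (Fin d) × ℝ => σ q.1 q.2.1 q.2.2)
        = fun q => n q.1 q.2.1 q.2.2 / ρ q.2.1 q.2.2 := funext fun q => hσ _ _ _
    rw [h]
    exact hn.div (hρsmooth.comp contDiff_snd) (fun q => hρne _ _)
  have hps : ContDiff ℝ (⊤ : ℕ∞) (fun q : EuclideanSpace ℝ (Fin d) × ℝ => p q.1 q.2) := by
    have h : (fun q : EuclideanSpace ℝ (Fin d) × ℝ => p q.1 q.2) = fun q => ρ q.1 q.2 ^ γ :=
      funext fun q => hp _ _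
    rw [h, contDiff_iff_contDiffAt]
    intro q
    exact (Real.contDiffAt_rpow_of_ne (ρ q.1 q.2, γ) (hρne _ _)).comp q
      (hρsmooth.contDiffAt.prodMk contDiffAt_const)
  -- slice smoothness
  have hslice_n : ∀ (y t : ℝ), ContDiff ℝ (⊤ : ℕ∞) (fun z => n y z t) := fun y t =>
    hn.comp (contDiff_const.prodMk (contDiff_id.prodMk contDiff_const))
  have hslice_σ : ∀ (y t : ℝ), ContDiff ℝ (⊤ : ℕ∞) (fun z => σ y z t) := fun y t =>
    hσs.comp (contDiff_const.prodMk (contDiff_id.prodMk contDiff_const))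
  have hslice_ρ : ∀ (t : ℝ), ContDiff ℝ (⊤ : ℕ∞) (fun z => ρ z t) := fun t =>
    hρsmooth.comp (contDiff_id.prodMk contDiff_const)
  have hslice_p : ∀ (t : ℝ), ContDiff ℝ (⊤ : ℕ∞) (fun z => p z t) := fun t =>
    hps.comp (contDiff_id.prodMk contDiff_const)
  have htime_n : ∀ (y : ℝ) (x : EuclideanSpace ℝ (Fin d)), ContDiff ℝ (⊤ : ℕ∞) (fun s => n y x s) :=
    fun y x => hn.comp (contDiff_const.prodMk (contDiff_const.prodMk contDiff_id))
  have htime_σ : ∀ (y : ℝ) (x : EuclideanSpace ℝ (Fin d)), ContDiff ℝ (⊤ : ℕ∞) (fun s => σ y x s) :=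
    fun y x => hσs.comp (contDiff_const.prodMk (contDiff_const.prodMk contDiff_id))
  have htime_ρ : ∀ (x : EuclideanSpace ℝ (Fin d)), ContDiff ℝ (⊤ : ℕ∞) (fun s => ρ x s) :=
    fun x => hρsmooth.comp (contDiff_const.prodMk contDiff_id)
  have hxy_n : ∀ (t : ℝ), ContDiff ℝ (⊤ : ℕ∞) (fun q : ℝ × EuclideanSpace ℝ (Fin d) => n q.1 q.2 t) :=
    fun t => hn.comp (contDiff_fst.prodMk (contDiff_snd.prodMk contDiff_const))
  -- derivative-in-space smoothness
  have hDp : ∀ i : Fin d, ContDiff ℝ (⊤ : ℕ∞)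
      (fun z => fderiv ℝ (fun w => p w t) z (EuclideanSpace.single i 1)) := fun i =>
    ((hslice_p t).fderiv_right (by simp)).clm_apply contDiff_const
  have hDρ : ∀ i : Fin d, ContDiff ℝ (⊤ : ℕ∞)
      (fun z => fderiv ℝ (fun w => ρ w t) z (EuclideanSpace.single i 1)) := fun i =>
    ((hslice_ρ t).fderiv_right (by simp)).clm_apply contDiff_const
  have hDσ : ∀ i : Fin d, ContDiff ℝ (⊤ : ℕ∞)
      (fun z => fderiv ℝ (fun w => σ y w t) z (EuclideanSpace.single i 1)) := fun i =>
    ((hslice_σ y t).fderiv_right (by simp)).clm_apply contDiff_const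
  -- n = σ * ρ
  have hnσρ : ∀ (y' : ℝ) (z : EuclideanSpace ℝ (Fin d)) (s : ℝ),
      n y' z s = σ y' z s * ρ z s := by
    intro y' z s; rw [hσ]; exact (div_mul_cancel₀ _ (hρne z s)).symm
  -- time derivative of ρ under the integral
  have hρt_eq : deriv (fun s => ρ x s) t = ∫ y in Icc (0:ℝ) 1, deriv (fun s => n y x s) t := by
    have hF : ContDiff ℝ (⊤ : ℕ∞) (fun q : ℝ × ℝ => n q.1 x q.2) :=
      hn.comp (contDiff_fst.prodMk (contDiff_const.prodMk contDiff_snd))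
    have h2 := param_hasDerivAt (fun y s => n y x s) hF t
    have h3 : (fun s => ρ x s) = fun s => ∫ y in Icc (0:ℝ) 1, n y x s := funext fun s => hρ x s
    rw [h3]
    exact h2.deriv
  -- first space derivative of ρ under the integral
  have hρx_eq : ∀ (z v : EuclideanSpace ℝ (Fin d)),
      fderiv ℝ (fun w => ρ w t) z v = ∫ y in Icc (0:ℝ) 1, fderiv ℝ (fun w => n y w t) z v := by
    intro z v
    exact fderiv_param_integral (fun y w => n y w t) (hxy_n t) (fun w => ρ w t)
      (fun w => hρ w t) ((hslice_ρ t).differentiable (n := (⊤ : ℕ∞)) (by simp)) z v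
  -- second space derivative of ρ under the integral
  have hρxx_eq : ∀ i : Fin d, pd2 (fun z => ρ z t) i i x
      = ∫ y in Icc (0:ℝ) 1, pd2 (fun z => n y z t) i i x := by
    intro i
    have hH : ContDiff ℝ (⊤ : ℕ∞) (fun q : ℝ × EuclideanSpace ℝ (Fin d) =>
        fderiv ℝ (fun w => n q.1 w t) q.2 (EuclideanSpace.single i 1)) :=
      contDiff_fderiv_param (fun y w => n y w t) (hxy_n t) _
    have hG1 : ∀ z, (fun z => fderiv ℝ (fun w => ρ w t) z (EuclideanSpace.single i 1)) z
        = ∫ y in Icc (0:ℝ) 1, fderiv ℝ (fun w => n y w t) z (EuclideanSpace.single i 1) :=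
      fun z => hρx_eq z _
    have hG1d : Differentiable ℝ (fun z => fderiv ℝ (fun w => ρ w t) z (EuclideanSpace.single i 1)) :=
      (((hslice_ρ t).fderiv_right (by simp)).clm_apply contDiff_const).differentiable (n := (⊤ : ℕ∞)) (by simp)
    have h := fderiv_param_integral
      (fun y z => fderiv ℝ (fun w => n y w t) z (EuclideanSpace.single i 1)) hH _ hG1 hG1d
      x (EuclideanSpace.single i 1)
    simpa [pd2] using h
  -- divergence in coordinates
  have hdivg_eq : ∀ (f : EuclideanSpace ℝ (Fin d) → ℝ) (x' : EuclideanSpace ℝ (Fin d)),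
      divg (fun z => f z • gradient (fun w => p w t) z) x'
        = ∑ i, fderiv ℝ (fun z => f z * fderiv ℝ (fun w => p w t) z (EuclideanSpace.single i 1))
            x' (EuclideanSpace.single i 1) := by
    intro f x'
    unfold divg
    beta_reduce
    refine Finset.sum_congr rfl fun i _ => ?_
    have hfun : (fun z => (f z • gradient (fun w => p w t) z) i)
        = fun z => f z * fderiv ℝ (fun w => p w t) z (EuclideanSpace.single i 1) := by
      funext z; simp [euclid_gradient_coord]
    exact congrArg (fun g => fderiv ℝ g x' (EuclideanSpace.single i 1)) hfun
  -- joint smoothness of the flux components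
  have hFi : ∀ i : Fin d, ContDiff ℝ (⊤ : ℕ∞) (fun q : ℝ × EuclideanSpace ℝ (Fin d) =>
      n q.1 q.2 t * fderiv ℝ (fun w => p w t) q.2 (EuclideanSpace.single i 1)) := fun i =>
    (hxy_n t).mul ((hDp i).comp contDiff_snd)
  have hHi : ∀ i : Fin d, ContDiff ℝ (⊤ : ℕ∞) (fun q : ℝ × EuclideanSpace ℝ (Fin d) =>
      fderiv ℝ (fun w => n q.1 w t) q.2 (EuclideanSpace.single i 1)) := fun i =>
    contDiff_fderiv_param (fun y w => n y w t) (hxy_n t) _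
  -- continuity in y of the various integrands
  have hcont_div : Continuous (fun y' =>
      divg (fun z => n y' z t • gradient (fun w => p w t) z) x) := by
    have h : (fun y' => divg (fun z => n y' z t • gradient (fun w => p w t) z) x)
        = fun y' => ∑ i, fderiv ℝ (fun z => n y' z t
            * fderiv ℝ (fun w => p w t) z (EuclideanSpace.single i 1)) x (EuclideanSpace.single i 1) :=
      funext fun y' => hdivg_eq (fun z => n y' z t) x
    rw [h]
    exact continuous_finset_sum _ fun i _ =>
      (contDiff_fderiv_param (fun y' z => n y' z t * fderiv ℝ (fun w => p w t) z (EuclideanSpace.single i 1)) (hFi i) (EuclideanSpace.single i 1)).continuous.comp (continuous_id.prodMk continuous_const)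
  have hcont_pd2 : ∀ i : Fin d, Continuous (fun y' => pd2 (fun z => n y' z t) i i x) := by
    intro i
    have h := (contDiff_fderiv_param
      (fun y' z => fderiv ℝ (fun w => n y' w t) z (EuclideanSpace.single i 1)) (hHi i)
      (EuclideanSpace.single i 1)).continuous.comp
      (continuous_id.prodMk (continuous_const (y := x)))
    simpa [pd2, Function.comp_def] using h
  have hcont_lap : Continuous (fun y' => lap (fun z => n y' z t) x) := by
    unfold lap
    exact continuous_finset_sum _ fun i _ => hcont_pd2 i
  have hcont_R : Continuous (fun y' => n y' x t * R y' (p x t)) :=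
    ((hn.comp (contDiff_id.prodMk (contDiff_const.prodMk contDiff_const))).continuous).mul
      ((hR.comp (contDiff_id.prodMk contDiff_const)).continuous)
  -- exchange for the divergence term
  have hdiv_exch : (∫ y' in Icc (0:ℝ) 1, divg (fun z => n y' z t • gradient (fun w => p w t) z) x)
      = divg (fun z => ρ z t • gradient (fun w => p w t) z) x := by
    have hGi : ∀ (i : Fin d) (z : EuclideanSpace ℝ (Fin d)),
        ρ z t * fderiv ℝ (fun w => p w t) z (EuclideanSpace.single i 1)
          = ∫ y' in Icc (0:ℝ) 1, n y' z t * fderiv ℝ (fun w => p w t) z (EuclideanSpace.single i 1) := by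
      intro i z; rw [hρ z t, ← integral_mul_const]
    have hexch : ∀ i : Fin d,
        fderiv ℝ (fun z => ρ z t * fderiv ℝ (fun w => p w t) z (EuclideanSpace.single i 1))
          x (EuclideanSpace.single i 1)
        = ∫ y' in Icc (0:ℝ) 1, fderiv ℝ (fun z => n y' z t
            * fderiv ℝ (fun w => p w t) z (EuclideanSpace.single i 1)) x (EuclideanSpace.single i 1) := by
      intro i
      exact fderiv_param_integral (fun y' z => n y' z t * fderiv ℝ (fun w => p w t) z (EuclideanSpace.single i 1)) (hFi i) (fun z => ρ z t * fderiv ℝ (fun w => p w t) z (EuclideanSpace.single i 1)) (fun z => hGi i z)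
        (((hslice_ρ t).mul (hDp i)).differentiable (n := (⊤ : ℕ∞)) (by simp)) x _
    calc (∫ y' in Icc (0:ℝ) 1, divg (fun z => n y' z t • gradient (fun w => p w t) z) x)
        = ∫ y' in Icc (0:ℝ) 1, ∑ i, fderiv ℝ (fun z => n y' z t
            * fderiv ℝ (fun w => p w t) z (EuclideanSpace.single i 1)) x (EuclideanSpace.single i 1) :=
          setIntegral_congr_fun measurableSet_Icc (fun y' _ => hdivg_eq (fun z => n y' z t) x)
      _ = ∑ i, ∫ y' in Icc (0:ℝ) 1, fderiv ℝ (fun z => n y' z t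
            * fderiv ℝ (fun w => p w t) z (EuclideanSpace.single i 1)) x (EuclideanSpace.single i 1) :=
          integral_finset_sum _ (fun i _ =>
            ((contDiff_fderiv_param (fun y' z => n y' z t * fderiv ℝ (fun w => p w t) z (EuclideanSpace.single i 1)) (hFi i) (EuclideanSpace.single i 1)).continuous.comp
              (continuous_id.prodMk continuous_const)).integrableOn_Icc)
      _ = ∑ i, fderiv ℝ (fun z => ρ z t * fderiv ℝ (fun w => p w t) z (EuclideanSpace.single i 1))
            x (EuclideanSpace.single i 1) := by
          exact Finset.sum_congr rfl fun i _ => (hexch i).symm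
      _ = divg (fun z => ρ z t • gradient (fun w => p w t) z) x := (hdivg_eq (fun z => ρ z t) x).symm
  -- the integrated PDE for ρ
  have hρpde : deriv (fun s => ρ x s) t
      = divg (fun z => ρ z t • gradient (fun w => p w t) z) x + ε * lap (fun z => ρ z t) x
        + ρ x t * ∫ η in Icc (0:ℝ) 1, σ η x t * R η (p x t) := by
    rw [hρt_eq]
    rw [setIntegral_congr_fun (f := fun y' => deriv (fun s => n y' x s) t) measurableSet_Icc
      (fun y' hy' => heq y' hy' x t ht)]
    have hint1 : Integrable (fun y' => divg (fun z => n y' z t • gradient (fun w => p w t) z) x)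
        (volume.restrict (Icc (0:ℝ) 1)) := hcont_div.integrableOn_Icc
    have hint2 : Integrable (fun y' => ε * lap (fun z => n y' z t) x)
        (volume.restrict (Icc (0:ℝ) 1)) := (continuous_const.mul hcont_lap).integrableOn_Icc
    have hint3 : Integrable (fun y' => n y' x t * R y' (p x t))
        (volume.restrict (Icc (0:ℝ) 1)) := hcont_R.integrableOn_Icc
    have hint12 : Integrable (fun y' => divg (fun z => n y' z t • gradient (fun w => p w t) z) x
        + ε * lap (fun z => n y' z t) x) (volume.restrict (Icc (0:ℝ) 1)) := hint1.add hint2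
    rw [integral_add hint12 hint3, integral_add hint1 hint2]
    have hB : (∫ y' in Icc (0:ℝ) 1, ε * lap (fun z => n y' z t) x)
        = ε * lap (fun z => ρ z t) x := by
      rw [integral_const_mul]
      congr 1
      unfold lap
      rw [integral_finset_sum _ (fun i _ => (hcont_pd2 i).integrableOn_Icc)]
      exact Finset.sum_congr rfl fun i _ => (hρxx_eq i).symm
    have hC : (∫ y' in Icc (0:ℝ) 1, n y' x t * R y' (p x t))
        = ρ x t * ∫ η in Icc (0:ℝ) 1, σ η x t * R η (p x t) := by
      have h : (fun y' => n y' x t * R y' (p x t))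
          = fun y' => ρ x t * (σ y' x t * R y' (p x t)) := funext fun y' => by
        rw [hnσρ]; ring
      rw [h, integral_const_mul]
    rw [hdiv_exch, hB, hC]
  -- time product rule
  have hnt : deriv (fun s => n y x s) t
      = deriv (fun s => σ y x s) t * ρ x t + σ y x t * deriv (fun s => ρ x s) t := by
    have h : (fun s => n y x s) = fun s => σ y x s * ρ x s := funext fun s => hnσρ y x s
    rw [h, deriv_fun_mul (((htime_σ y x).differentiable (n := (⊤ : ℕ∞)) (by simp)) t) (((htime_ρ x).differentiable (n := (⊤ : ℕ∞)) (by simp)) t)]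
  -- first space product rule
  have hnx : ∀ (z : EuclideanSpace ℝ (Fin d)) (i : Fin d),
      fderiv ℝ (fun w => n y w t) z (EuclideanSpace.single i 1)
        = fderiv ℝ (fun w => σ y w t) z (EuclideanSpace.single i 1) * ρ z t
          + σ y z t * fderiv ℝ (fun w => ρ w t) z (EuclideanSpace.single i 1) := by
    intro z i
    have h : (fun w => n y w t) = fun w => σ y w t * ρ w t := funext fun w => hnσρ y w t
    rw [h, fderiv_fun_mul (((hslice_σ y t).differentiable (n := (⊤ : ℕ∞)) (by simp)) z) (((hslice_ρ t).differentiable (n := (⊤ : ℕ∞)) (by simp)) z)]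
    simp only [ContinuousLinearMap.add_apply, ContinuousLinearMap.coe_smul', Pi.smul_apply,
      smul_eq_mul]
    ring
  -- second space product rule
  have hnxx : ∀ i : Fin d, pd2 (fun z => n y z t) i i x
      = pd2 (fun z => σ y z t) i i x * ρ x t
        + 2 * (fderiv ℝ (fun w => σ y w t) x (EuclideanSpace.single i 1))
            * (fderiv ℝ (fun w => ρ w t) x (EuclideanSpace.single i 1))
        + σ y x t * pd2 (fun z => ρ z t) i i x := by
    intro i
    have h1 : (fun z => fderiv ℝ (fun w => n y w t) z (EuclideanSpace.single i 1))
        = fun z => fderiv ℝ (fun w => σ y w t) z (EuclideanSpace.single i 1) * ρ z t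
            + σ y z t * fderiv ℝ (fun w => ρ w t) z (EuclideanSpace.single i 1) :=
      funext fun z => hnx z i
    have dA : DifferentiableAt ℝ
        (fun z => fderiv ℝ (fun w => σ y w t) z (EuclideanSpace.single i 1)) x :=
      ((hDσ i).differentiable (n := (⊤ : ℕ∞)) (by simp)) x
    have dB : DifferentiableAt ℝ (fun z => ρ z t) x := ((hslice_ρ t).differentiable (n := (⊤ : ℕ∞)) (by simp)) x
    have dC : DifferentiableAt ℝ (fun z => σ y z t) x := ((hslice_σ y t).differentiable (n := (⊤ : ℕ∞)) (by simp)) x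
    have dD : DifferentiableAt ℝ
        (fun z => fderiv ℝ (fun w => ρ w t) z (EuclideanSpace.single i 1)) x :=
      ((hDρ i).differentiable (n := (⊤ : ℕ∞)) (by simp)) x
    unfold pd2
    rw [h1, fderiv_fun_add (dA.fun_mul dB) (dC.fun_mul dD), fderiv_fun_mul dA dB, fderiv_fun_mul dC dD]
    simp only [ContinuousLinearMap.add_apply, ContinuousLinearMap.coe_smul', Pi.smul_apply,
      smul_eq_mul]
    ring
  -- laplacian product rule
  have hlapn : lap (fun z => n y z t) x
      = lap (fun z => σ y z t) x * ρ x t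
        + 2 * (∑ i, fderiv ℝ (fun w => σ y w t) x (EuclideanSpace.single i 1)
            * fderiv ℝ (fun w => ρ w t) x (EuclideanSpace.single i 1))
        + σ y x t * lap (fun z => ρ z t) x := by
    unfold lap
    rw [Finset.sum_congr rfl fun i _ => hnxx i]
    rw [Finset.sum_add_distrib, Finset.sum_add_distrib, ← Finset.sum_mul, ← Finset.mul_sum]
    congr 1
    congr 1
    rw [Finset.mul_sum]
    exact Finset.sum_congr rfl fun i _ => by ring
  -- divergence expansions
  have hdivn : divg (fun z => n y z t • gradient (fun w => p w t) z) x
      = ∑ i, (fderiv ℝ (fun w => n y w t) x (EuclideanSpace.single i 1)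
          * fderiv ℝ (fun w => p w t) x (EuclideanSpace.single i 1)
          + n y x t * pd2 (fun z => p z t) i i x) := by
    rw [hdivg_eq (fun z => n y z t) x]
    refine Finset.sum_congr rfl fun i _ => ?_
    rw [fderiv_fun_mul (((hslice_n y t).differentiable (n := (⊤ : ℕ∞)) (by simp)) x) (((hDp i).differentiable (n := (⊤ : ℕ∞)) (by simp)) x)]
    simp only [ContinuousLinearMap.add_apply, ContinuousLinearMap.coe_smul', Pi.smul_apply,
      smul_eq_mul]
    unfold pd2
    ring
  have hdivρ : divg (fun z => ρ z t • gradient (fun w => p w t) z) x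
      = ∑ i, (fderiv ℝ (fun w => ρ w t) x (EuclideanSpace.single i 1)
          * fderiv ℝ (fun w => p w t) x (EuclideanSpace.single i 1)
          + ρ x t * pd2 (fun z => p z t) i i x) := by
    rw [hdivg_eq (fun z => ρ z t) x]
    refine Finset.sum_congr rfl fun i _ => ?_
    rw [fderiv_fun_mul (((hslice_ρ t).differentiable (n := (⊤ : ℕ∞)) (by simp)) x) (((hDp i).differentiable (n := (⊤ : ℕ∞)) (by simp)) x)]
    simp only [ContinuousLinearMap.add_apply, ContinuousLinearMap.coe_smul', Pi.smul_apply,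
      smul_eq_mul]
    unfold pd2
    ring
  have hdiv_diff : divg (fun z => n y z t • gradient (fun w => p w t) z) x
      = ρ x t * (∑ i, fderiv ℝ (fun w => σ y w t) x (EuclideanSpace.single i 1)
          * fderiv ℝ (fun w => p w t) x (EuclideanSpace.single i 1))
        + σ y x t * divg (fun z => ρ z t • gradient (fun w => p w t) z) x := by
    rw [hdivn, hdivρ, Finset.mul_sum, Finset.mul_sum, ← Finset.sum_add_distrib]
    refine Finset.sum_congr rfl fun i _ => ?_
    rw [hnx x i, hnσρ y x t]
    ring
  -- final assembly
  have E1 := heq y hy x t ht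
  rw [hnt, hρpde, hdiv_diff, hlapn, hnσρ y x t] at E1
  rw [euclid_inner_grad, euclid_inner_grad]
  have hρ0 : ρ x t ≠ 0 := hρne x t
  refine mul_right_cancel₀ hρ0 ?_
  field_simp
  linear_combination E1
end
end
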